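/- Let h_1, …, h_n ∈ ℝᵈ, let k ≥ 1 be a natural number, let α ∈ ℝ and β ∈ ℝᵈ, and let G be the n × n matrix with entries G_{ij} = (⟨h_i, h_j⟩)ᵏ. Assume G is positive definite. Define y ∈ ℝⁿ by y_i = α·(⟨h_i, β⟩)ᵏ. Then yᵀ G⁻¹ y ≤ α²·‖β‖^{2k}, where ‖β‖ is the Euclidean norm. -/

import Mathlib

/-!
Since `⟪x, z⟫ ^ k = ⟪x^⊗k, z^⊗k⟫`, `G` is the Gram matrix of the tensor powers `hᵢ^⊗k` and
`yᵢ = ⟪hᵢ^⊗k, α • β^⊗k⟫`. Then `yᵀ G⁻¹ y` is the squared norm of the orthogonal projection of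
`α • β^⊗k` onto the span of the `hᵢ^⊗k`, which is at most `‖α • β^⊗k‖² = α² ‖β‖^(2k)`.
-/

open Matrix

open scoped InnerProductSpace

namespace Matrix

variable {E ι : Type*} [NormedAddCommGroup E] [InnerProductSpace ℝ E] [Fintype ι] [DecidableEq ι]

/-- With `c = G⁻¹ y` and `v = ∑ cᵢ uᵢ`, both `‖v‖²` and `⟪v, w⟫` equal `y ⬝ᵥ c`, so Cauchy–Schwarz
gives `‖v‖ ≤ ‖w‖`. -/
theorem dotProduct_inv_gram_mulVec_le_norm_sq (u : ι → E) (w : E) (hG : IsUnit (gram ℝ u).det) :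
    (fun i ↦ ⟪u i, w⟫_ℝ) ⬝ᵥ (gram ℝ u)⁻¹ *ᵥ (fun i ↦ ⟪u i, w⟫_ℝ) ≤ ‖w‖ ^ 2 := by
  set y : ι → ℝ := fun i ↦ ⟪u i, w⟫_ℝ
  set c := (gram ℝ u)⁻¹ *ᵥ y
  set v := ∑ i, c i • u i
  have hGc : gram ℝ u *ᵥ c = y := by
    rw [mulVec_mulVec, mul_nonsing_inv _ hG, one_mulVec]
  have hvv : ‖v‖ ^ 2 = y ⬝ᵥ c := by
    rw [← real_inner_self_eq_norm_sq, ← star_dotProduct_gram_mulVec, hGc, star_trivial,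
      dotProduct_comm]
  have hvw : ⟪v, w⟫_ℝ = y ⬝ᵥ c := by
    simp only [v, sum_inner, real_inner_smul_left, dotProduct, y, mul_comm]
  have hCS : ‖v‖ ^ 2 ≤ ‖v‖ * ‖w‖ := hvv ▸ hvw ▸ real_inner_le_norm v w
  rw [← hvv]
  nlinarith [norm_nonneg v, norm_nonneg w, sq_nonneg (‖v‖ - ‖w‖)]

end Matrix

namespace EuclideanSpace

variable {ι : Type*} [Fintype ι]

/-- The degree-`k` tensor power `x ⊗ ⋯ ⊗ x`, written in coordinates indexed by `Fin k → ι`. -/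
noncomputable def tensorPow (k : ℕ) (x : EuclideanSpace ℝ ι) : EuclideanSpace ℝ (Fin k → ι) :=
  WithLp.toLp 2 fun f ↦ ∏ j, x (f j)

theorem inner_tensorPow (k : ℕ) (x z : EuclideanSpace ℝ ι) :
    ⟪tensorPow k x, tensorPow k z⟫_ℝ = ⟪x, z⟫_ℝ ^ k := by
  classical
  calc ⟪tensorPow k x, tensorPow k z⟫_ℝ = ∑ f : Fin k → ι, ∏ j, x (f j) * z (f j) := by
        simp [tensorPow, PiLp.inner_apply, Finset.prod_mul_distrib, mul_comm]
    _ = ∏ _j : Fin k, ∑ i, x i * z i := by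
        rw [Finset.prod_univ_sum, Fintype.piFinset_univ]
    _ = ⟪x, z⟫_ℝ ^ k := by
        simp [PiLp.inner_apply, mul_comm]

theorem norm_tensorPow (k : ℕ) (x : EuclideanSpace ℝ ι) : ‖tensorPow k x‖ = ‖x‖ ^ k := by
  rw [norm_eq_sqrt_real_inner, inner_tensorPow, real_inner_self_eq_norm_sq, ← pow_mul,
    pow_mul', Real.sqrt_sq (by positivity)]

end EuclideanSpace

open EuclideanSpace in
theorem stmt_17_general (n d : ℕ) (h : Fin n → EuclideanSpace ℝ (Fin d))
    (k : ℕ) (α : ℝ) (β : EuclideanSpace ℝ (Fin d))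
    (G : Matrix (Fin n) (Fin n) ℝ)
    (hG : G = Matrix.of fun i j => (inner ℝ (h i) (h j) : ℝ) ^ k)
    (hGpd : G.PosDef)
    (y : Fin n → ℝ) (hy : ∀ i, y i = α * (inner ℝ (h i) β : ℝ) ^ k) :
    y ⬝ᵥ G⁻¹ *ᵥ y ≤ α ^ 2 * ‖β‖ ^ (2 * k) := by
  have hG_gram : G = gram ℝ (tensorPow k ∘ h) := by
    ext i j
    simp [hG, inner_tensorPow]
  have hy_inner : y = fun i ↦ ⟪tensorPow k (h i), α • tensorPow k β⟫_ℝ := by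
    ext i
    rw [hy, real_inner_smul_right, inner_tensorPow]
  have hw : ‖α • tensorPow k β‖ ^ 2 = α ^ 2 * ‖β‖ ^ (2 * k) := by
    rw [norm_smul, norm_tensorPow, mul_pow, Real.norm_eq_abs, sq_abs, ← pow_mul, mul_comm k]
  rw [← hw, hy_inner, hG_gram]
  exact dotProduct_inv_gram_mulVec_le_norm_sq _ _ (hG_gram ▸ hGpd.isUnit.map detMonoidHom)

theorem stmt_17 (n d : ℕ) (h : Fin n → EuclideanSpace ℝ (Fin d))
    (k : ℕ) (hk : 1 ≤ k) (α : ℝ) (β : EuclideanSpace ℝ (Fin d))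
    (G : Matrix (Fin n) (Fin n) ℝ)
    (hG : G = Matrix.of fun i j => (inner ℝ (h i) (h j) : ℝ) ^ k)
    (hGpd : G.PosDef)
    (y : Fin n → ℝ) (hy : ∀ i, y i = α * (inner ℝ (h i) β : ℝ) ^ k) :
    y ⬝ᵥ G⁻¹ *ᵥ y ≤ α ^ 2 * ‖β‖ ^ (2 * k) :=
  stmt_17_general n d h k α β G hG hGpd y hy
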